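/- arXiv:2512.02187 — 3 statements merged into one kernel-verified Lean document; each statement's English description precedes it below -/
import Mathlib

section
/- With T, ι, κ, G as above: the involution ι acts freely on T (has no fixed points), and every point of T with nontrivial stabilizer under the G-action has stabilizer exactly the subgroup ⟨κ⟩ of order 2. -/
/-- With `T = ℂ/(ℤ+2τℤ) × ℂ/(ℤ+iℤ)²`, `ι(t,z₁,z₂) = (t+τ,-z₁,-z₂)`,
`κ(t,z₁,z₂) = (-t,z₁,-z₂)` and `G = ⟨ι,κ⟩ ≅ (ℤ/2ℤ)²`: the involution `ι` acts
freely on `T`, and no point is fixed simultaneously by `κ` and `ικ`; hence every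
stabilizer of the `G`-action is trivial, `⟨κ⟩`, or `⟨ικ⟩` (in particular of order
at most `2`), and never all of `G`. -/
theorem iota_free_and_stabilizers
    (τ : ℂ) (hτ : 0 < τ.im)
    (Λ Λi : AddSubgroup ℂ)
    (hΛ : Λ = AddSubgroup.closure {1, 2 * τ})
    (hΛi : Λi = AddSubgroup.closure {1, Complex.I})
    (ι κ : (ℂ ⧸ Λ) × (ℂ ⧸ Λi) × (ℂ ⧸ Λi) → (ℂ ⧸ Λ) × (ℂ ⧸ Λi) × (ℂ ⧸ Λi))
    (hι : ∀ p, ι p = (p.1 + QuotientAddGroup.mk (s := Λ) τ, -p.2.1, -p.2.2))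
    (hκ : ∀ p, κ p = (-p.1, p.2.1, -p.2.2)) :
    (∀ p, ι p ≠ p) ∧
    (∀ p, ¬ (κ p = p ∧ ι (κ p) = p)) := by
  have key : ∀ p : (ℂ ⧸ Λ) × (ℂ ⧸ Λi) × (ℂ ⧸ Λi), ι p ≠ p := by
    intro p hp
    have h1 : p.1 + QuotientAddGroup.mk (s := Λ) τ = p.1 := by
      have := congrArg Prod.fst hp
      rwa [hι] at this
    have h2 : QuotientAddGroup.mk (s := Λ) τ = 0 := by
      have h1' : p.1 + QuotientAddGroup.mk (s := Λ) τ = p.1 + 0 := by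
        rw [add_zero]; exact h1
      exact add_left_cancel h1'
    have hmem : τ ∈ Λ := by
      rwa [← QuotientAddGroup.eq_zero_iff]
    rw [hΛ, AddSubgroup.mem_closure_pair] at hmem
    obtain ⟨m, n, hmn⟩ := hmem
    have him := congrArg Complex.im hmn
    simp [Complex.add_im, Complex.mul_im] at him
    -- him : (n : ℝ) * (2 * τ).im = τ.im or similar
    have h2n : (2 * (n : ℝ)) * τ.im = τ.im := by
      push_cast at him ⊢
      linarith [him]
    have : (2 * (n : ℝ)) = 1 := by
      have hne : τ.im ≠ 0 := ne_of_gt hτ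
      field_simp at h2n
      rcases mul_eq_mul_right_iff.mp (by linarith [h2n] : (2 * (n : ℝ)) * τ.im = 1 * τ.im) with h | h
      · simpa using h
      · exact absurd h hne
    have : (2 * n : ℤ) = 1 := by exact_mod_cast this
    omega
  exact ⟨key, fun p ⟨h1, h2⟩ => key p (by rw [h1] at h2; exact h2)⟩
end

section
/- With M = T/⟨ι⟩ as above and κ the induced involution on M: the induced action of κ on the fiber of M → ℂ/(ℤ+τℤ) over the fixed points [0] and [1/2] is given by (z₁,z₂) ↦ (z₁,-z₂) on ℂ/(ℤ+iℤ)², while over the fixed points [τ/2] and [(1+τ)/2] it is given by (z₁,z₂) ↦ (-z₁,z₂). In each case the fixed-point set in the fiber is a disjoint union of 4 copies of ℂ/(ℤ+iℤ), namely ℂ/(ℤ+iℤ) × A (resp. A × ℂ/(ℤ+iℤ)), where A is the set of 4 half-lattice points of ℂ/(ℤ+iℤ). -/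
/-- On `T = ℂ/(ℤ+2τℤ) × ℂ/(ℤ+iℤ)²` with `ι(t,z₁,z₂) = (t+τ,-z₁,-z₂)`
and `κ(t,z₁,z₂) = (-t,z₁,-z₂)`: on the fibers over `[0]` and `[1/2]` the induced
action of `κ` on `M = T/⟨ι⟩` is `(z₁,z₂) ↦ (z₁,-z₂)`, with fixed-point set
`ℂ/(ℤ+iℤ) × A`; over `[τ/2]` and `[(1+τ)/2]` (where the identification uses `κ∘ι`)
it is `(z₁,z₂) ↦ (-z₁,z₂)`, with fixed-point set `A × ℂ/(ℤ+iℤ)`; here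
`A = {[0],[1/2],[i/2],[(1+i)/2]}` is the 2-torsion of `ℂ/(ℤ+iℤ)`, so each fixed
set is a disjoint union of 4 copies of `ℂ/(ℤ+iℤ)`. -/
theorem kappa_action_on_fibers
    (τ : ℂ) (hτ : 0 < τ.im)
    (Λ Λi : AddSubgroup ℂ)
    (hΛ : Λ = AddSubgroup.closure {1, 2 * τ})
    (hΛi : Λi = AddSubgroup.closure {1, Complex.I})
    (ι κ : (ℂ ⧸ Λ) × (ℂ ⧸ Λi) × (ℂ ⧸ Λi) → (ℂ ⧸ Λ) × (ℂ ⧸ Λi) × (ℂ ⧸ Λi))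
    (hι : ∀ p, ι p = (p.1 + QuotientAddGroup.mk (s := Λ) τ, -p.2.1, -p.2.2))
    (hκ : ∀ p, κ p = (-p.1, p.2.1, -p.2.2))
    (A : Set (ℂ ⧸ Λi))
    (hA : A = {QuotientAddGroup.mk (s := Λi) 0, QuotientAddGroup.mk (s := Λi) (1 / 2),
      QuotientAddGroup.mk (s := Λi) (Complex.I / 2),
      QuotientAddGroup.mk (s := Λi) ((1 + Complex.I) / 2)}) :
    -- the 2-torsion of ℂ/(ℤ+iℤ) is A
    ({x : ℂ ⧸ Λi | x + x = 0} = A) ∧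
    -- over [0] and [1/2], κ acts on the fiber as (z₁,z₂) ↦ (z₁,-z₂)
    (∀ t ∈ ({0, 1 / 2} : Set ℂ), ∀ z₁ z₂ : ℂ ⧸ Λi,
      κ (QuotientAddGroup.mk (s := Λ) t, z₁, z₂) =
        (QuotientAddGroup.mk (s := Λ) t, z₁, -z₂) ∧
      (κ (QuotientAddGroup.mk (s := Λ) t, z₁, z₂) =
          (QuotientAddGroup.mk (s := Λ) t, z₁, z₂) ↔ z₂ ∈ A)) ∧
    -- over [τ/2] and [(1+τ)/2], the relevant action κ∘ι is (z₁,z₂) ↦ (-z₁,z₂)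
    (∀ t ∈ ({τ / 2, (1 + τ) / 2} : Set ℂ), ∀ z₁ z₂ : ℂ ⧸ Λi,
      κ (ι (QuotientAddGroup.mk (s := Λ) t, z₁, z₂)) =
        (QuotientAddGroup.mk (s := Λ) t, -z₁, z₂) ∧
      (κ (ι (QuotientAddGroup.mk (s := Λ) t, z₁, z₂)) =
          (QuotientAddGroup.mk (s := Λ) t, z₁, z₂) ↔ z₁ ∈ A)) := by
  subst hΛ hΛi hA
  have hmem : ∀ z : ℂ, z ∈ AddSubgroup.closure ({1, Complex.I} : Set ℂ) ↔
      ∃ m n : ℤ, (m : ℂ) + n * Complex.I = z := by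
    intro z
    rw [AddSubgroup.mem_closure_pair]
    simp [zsmul_eq_mul]
  have hmk : ∀ z w : ℂ, (∃ m n : ℤ, (m : ℂ) + n * Complex.I = -z + w) →
      (QuotientAddGroup.mk (s := AddSubgroup.closure ({1, Complex.I} : Set ℂ)) z =
        QuotientAddGroup.mk (s := AddSubgroup.closure ({1, Complex.I} : Set ℂ)) w) := by
    intro z w h
    rw [QuotientAddGroup.eq]
    exact (hmem _).2 h
  have h1 : (1 : ℂ) ∈ AddSubgroup.closure ({1, 2 * τ} : Set ℂ) :=
    AddSubgroup.subset_closure (by simp)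
  have h2τ : (2 * τ : ℂ) ∈ AddSubgroup.closure ({1, 2 * τ} : Set ℂ) :=
    AddSubgroup.subset_closure (by simp)
  have htor : {x : ℂ ⧸ AddSubgroup.closure ({1, Complex.I} : Set ℂ) | x + x = 0} =
      ({QuotientAddGroup.mk 0, QuotientAddGroup.mk (1 / 2),
        QuotientAddGroup.mk (Complex.I / 2), QuotientAddGroup.mk ((1 + Complex.I) / 2)} :
        Set (ℂ ⧸ AddSubgroup.closure ({1, Complex.I} : Set ℂ))) := by
    ext x
    induction x using QuotientAddGroup.induction_on with
    | H z =>
      simp only [Set.mem_setOf_eq, Set.mem_insert_iff, Set.mem_singleton_iff]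
      constructor
      · intro h
        rw [← QuotientAddGroup.mk_add, QuotientAddGroup.eq_zero_iff, hmem] at h
        obtain ⟨m, n, hmn⟩ := h
        rcases Int.even_or_odd m with ⟨a, ha⟩ | ⟨a, ha⟩ <;>
          rcases Int.even_or_odd n with ⟨b, hb⟩ | ⟨b, hb⟩
        · refine Or.inl (hmk z 0 ⟨-a, -b, ?_⟩)
          subst ha hb
          push_cast at hmn ⊢
          linear_combination -hmn / 2
        · refine Or.inr (Or.inr (Or.inl (hmk z (Complex.I / 2) ⟨-a, -b, ?_⟩)))
          subst ha hb
          push_cast at hmn ⊢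
          linear_combination -hmn / 2
        · refine Or.inr (Or.inl (hmk z (1 / 2) ⟨-a, -b, ?_⟩))
          subst ha hb
          push_cast at hmn ⊢
          linear_combination -hmn / 2
        · refine Or.inr (Or.inr (Or.inr (hmk z ((1 + Complex.I) / 2) ⟨-a, -b, ?_⟩)))
          subst ha hb
          push_cast at hmn ⊢
          linear_combination -hmn / 2
      · rintro (h | h | h | h) <;> rw [h] <;>
          rw [← QuotientAddGroup.mk_add, QuotientAddGroup.eq_zero_iff, hmem]
        · exact ⟨0, 0, by norm_num⟩
        · exact ⟨1, 0, by norm_num⟩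
        · exact ⟨0, 1, by push_cast; ring⟩
        · exact ⟨1, 1, by push_cast; ring⟩
  have hA' : ∀ y : ℂ ⧸ AddSubgroup.closure ({1, Complex.I} : Set ℂ), -y = y ↔ y ∈
      ({QuotientAddGroup.mk 0, QuotientAddGroup.mk (1 / 2),
        QuotientAddGroup.mk (Complex.I / 2), QuotientAddGroup.mk ((1 + Complex.I) / 2)} :
        Set (ℂ ⧸ AddSubgroup.closure ({1, Complex.I} : Set ℂ))) := by
    intro y
    rw [← Set.ext_iff.1 htor y, Set.mem_setOf_eq, neg_eq_iff_add_eq_zero]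
  refine ⟨htor, ?_, ?_⟩
  · intro t ht z₁ z₂
    have h2t : (t + t : ℂ) ∈ AddSubgroup.closure ({1, 2 * τ} : Set ℂ) := by
      rcases ht with rfl | rfl
      · simpa using (AddSubgroup.zero_mem _)
      · norm_num [h1]
    have hneg : -(QuotientAddGroup.mk (s := AddSubgroup.closure ({1, 2 * τ} : Set ℂ)) t) =
        QuotientAddGroup.mk (s := AddSubgroup.closure ({1, 2 * τ} : Set ℂ)) t := by
      rw [← QuotientAddGroup.mk_neg, QuotientAddGroup.eq]
      simpa using h2t
    have hfirst : κ (QuotientAddGroup.mk t, z₁, z₂) = (QuotientAddGroup.mk t, z₁, -z₂) := by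
      rw [hκ]
      simp [hneg]
    refine ⟨hfirst, ?_⟩
    rw [hfirst, Prod.ext_iff, Prod.ext_iff]
    simp [hA' z₂]
  · intro t ht z₁ z₂
    have h2t : (t + τ + t : ℂ) ∈ AddSubgroup.closure ({1, 2 * τ} : Set ℂ) := by
      rcases ht with rfl | rfl
      · have h : (τ / 2 + τ + τ / 2 : ℂ) = 2 * τ := by ring
        rw [h]
        exact h2τ
      · have h : ((1 + τ) / 2 + τ + (1 + τ) / 2 : ℂ) = 1 + 2 * τ := by ring
        rw [h]
        exact AddSubgroup.add_mem _ h1 h2τ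
    have hneg : -(QuotientAddGroup.mk (s := AddSubgroup.closure ({1, 2 * τ} : Set ℂ)) t +
        QuotientAddGroup.mk (s := AddSubgroup.closure ({1, 2 * τ} : Set ℂ)) τ) =
        QuotientAddGroup.mk (s := AddSubgroup.closure ({1, 2 * τ} : Set ℂ)) t := by
      rw [← QuotientAddGroup.mk_add, ← QuotientAddGroup.mk_neg, QuotientAddGroup.eq]
      simpa using h2t
    have hfirst : κ (ι (QuotientAddGroup.mk t, z₁, z₂)) =
        (QuotientAddGroup.mk t, -z₁, z₂) := by
      rw [hι, hκ]
      simp [hneg]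
    refine ⟨hfirst, ?_⟩
    rw [hfirst, Prod.ext_iff, Prod.ext_iff]
    simp [hA' z₁]
end

section
/- In the setting of the previous statement: the Aeppli class of αy - xγ modulo the ideal [α]·H_A(A) + H_A(A)·[γ] does not depend on the choice of the potentials x, y. That is, if i∂∂̄x = i∂∂̄x' = αβ and i∂∂̄y = i∂∂̄y' = βγ, then [αy - xγ] - [αy' - x'γ] ∈ [α]H_A(A) + H_A(A)[γ]. -/
/-- In the bigraded bidifferential algebra setting, the Aeppli class
of `αy - xγ` modulo `[α]·H_A + H_A·[γ]` is independent of the choice of potentials: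
if `i∂∂̄x = i∂∂̄x' = αβ` and `i∂∂̄y = i∂∂̄y' = βγ`, then the difference
`(αy - xγ) - (αy' - x'γ)` equals `αu + vγ + ∂p + ∂̄q` with `u, v ∈ ker(∂∂̄)`, i.e.
it represents an element of `[α]·H_A(A) + H_A(A)·[γ]`. -/
theorem abc_massey_independent_of_potentials
    {A : Type*} [Ring A] [Algebra ℂ A]
    (d₁ d₂ : A →ₗ[ℂ] A)
    (hd₁ : ∀ a, d₁ (d₁ a) = 0) (hd₂ : ∀ a, d₂ (d₂ a) = 0)
    (hanti : ∀ a, d₁ (d₂ a) = -d₂ (d₁ a))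
    (α β γ x x' y y' : A)
    (hα₁ : d₁ α = 0) (hα₂ : d₂ α = 0)
    (hβ₁ : d₁ β = 0) (hβ₂ : d₂ β = 0)
    (hγ₁ : d₁ γ = 0) (hγ₂ : d₂ γ = 0)
    (hx : Complex.I • d₁ (d₂ x) = α * β)
    (hx' : Complex.I • d₁ (d₂ x') = α * β)
    (hy : Complex.I • d₁ (d₂ y) = β * γ)
    (hy' : Complex.I • d₁ (d₂ y') = β * γ) :
    ∃ u v p q : A,
      d₁ (d₂ u) = 0 ∧ d₁ (d₂ v) = 0 ∧
      (α * y - x * γ) - (α * y' - x' * γ) = α * u + v * γ + d₁ p + d₂ q := by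
  have key : ∀ z w : A, Complex.I • z = Complex.I • w → z = w := by
    intro z w h
    have := congrArg (fun t => (-Complex.I) • t) h
    simpa [smul_smul] using this
  refine ⟨y - y', x' - x, 0, 0, ?_, ?_, ?_⟩
  · have := key _ _ (hy.trans hy'.symm)
    simp [map_sub, this]
  · have := key _ _ (hx'.trans hx.symm)
    simp [map_sub, this]
  · simp only [mul_sub, sub_mul, map_zero, add_zero]
    abel
end
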